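/- arXiv:nlin/0306036 — 3 statements merged into one kernel-verified Lean document; each statement's English description precedes it below -/
import Mathlib

section
/- (Lemma 5) Let f ∈ ℝ^m satisfy Lf = 0. Then Γ(f,f) = (1/2) L( f²/√(αM) ), where f²/√(αM) denotes the vector with components f_i² / √(α_i M_i). -/
/-!
Write `Λ^{1/2} f = M w`. By the Maxwellian relation `A^{ij}_{kl} M_i M_j = A^{ij}_{kl} M_k M_l`,
`L f = 0` says `∑_{jkl} A^{ij}_{kl} M_i M_j (w_i + w_j - w_k - w_l) = 0` for every `i`. Pairing with
`w` and symmetrizing over the collision symmetries `i ↔ j`, `(ij) ↔ (kl)` yields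
`∑ A^{ij}_{kl} M_i M_j (w_i + w_j - w_k - w_l)² = 0`, so `w` is a collision invariant. On every
collision `(w_i + w_j)² = (w_k + w_l)²` then holds, which turns `Q(Mw, Mw)` into `-Q(M, Mw²)`; and
`Λ^{1/2} (f²/√(αM)) = M w²`.
-/

open Finset

/-- The discrete Boltzmann collision operator `Q`.
`A i j k l` stands for the transition rate `A^{ij}_{kl}`. -/
noncomputable def Qop {m : ℕ} (α : Fin m → ℝ) (A : Fin m → Fin m → Fin m → Fin m → ℝ)
    (F G : Fin m → ℝ) : Fin m → ℝ := fun i =>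
  (1 / (2 * α i)) *
    ∑ j, ∑ k, ∑ l,
      (A i j k l * (F k * G l + F l * G k) - A k l i j * (F i * G j + F j * G i))

/-- `φ` is a summational invariant. -/
def SummInv {m : ℕ} (α : Fin m → ℝ) (A : Fin m → Fin m → Fin m → Fin m → ℝ)
    (φ : Fin m → ℝ) : Prop :=
  ∀ i j k l, A i j k l * (φ i / α i + φ j / α j - φ k / α k - φ l / α l) = 0

/-- Multiplication by `Λ^{1/2}`, where `Λ = diag (M i / α i)`. -/
noncomputable def sqrtLam {m : ℕ} (α M : Fin m → ℝ) (f : Fin m → ℝ) : Fin m → ℝ :=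
  fun i => Real.sqrt (M i / α i) * f i

/-- Multiplication by `Λ^{-1/2}`, where `Λ = diag (M i / α i)`. -/
noncomputable def invSqrtLam {m : ℕ} (α M : Fin m → ℝ) (f : Fin m → ℝ) : Fin m → ℝ :=
  fun i => (Real.sqrt (M i / α i))⁻¹ * f i

/-- The linearized collision operator `L f = -2 Λ^{-1/2} Q (M, Λ^{1/2} f)`. -/
noncomputable def Lop {m : ℕ} (α : Fin m → ℝ) (A : Fin m → Fin m → Fin m → Fin m → ℝ)
    (M : Fin m → ℝ) (f : Fin m → ℝ) : Fin m → ℝ :=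
  (-2 : ℝ) • invSqrtLam α M (Qop α A M (sqrtLam α M f))

/-- The quadratic operator `Γ (f, g) = Λ^{-1/2} Q (Λ^{1/2} f, Λ^{1/2} g)`. -/
noncomputable def Gam {m : ℕ} (α : Fin m → ℝ) (A : Fin m → Fin m → Fin m → Fin m → ℝ)
    (M : Fin m → ℝ) (f g : Fin m → ℝ) : Fin m → ℝ :=
  invSqrtLam α M (Qop α A (sqrtLam α M f) (sqrtLam α M g))

section CollisionSums

variable {ι R : Type*} [Fintype ι]

theorem sum4_comm_pairs [AddCommMonoid R] (F : ι → ι → ι → ι → R) :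
    ∑ i, ∑ j, ∑ k, ∑ l, F k l i j = ∑ i, ∑ j, ∑ k, ∑ l, F i j k l := by
  simp only [← Fintype.sum_prod_type']
  exact Fintype.sum_equiv ((Equiv.prodAssoc ι ι _).symm.trans
    ((Equiv.prodComm _ _).trans (Equiv.prodAssoc ι ι _))) _ _ fun _ => rfl

theorem eq_zero_of_sum4_eq_zero [AddCommMonoid R] [PartialOrder R] [IsOrderedAddMonoid R]
    {F : ι → ι → ι → ι → R} (hF : ∀ i j k l, 0 ≤ F i j k l)
    (h : ∑ i, ∑ j, ∑ k, ∑ l, F i j k l = 0) (i j k l : ι) : F i j k l = 0 := by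
  simp only [← Fintype.sum_prod_type'] at h
  exact congrFun ((Fintype.sum_eq_zero_iff_of_nonneg fun _ => hF _ _ _ _).1 h) (i, j, k, l)

theorem sum4_mul_sq_collision [CommRing R] {B : ι → ι → ι → ι → R}
    (hB₁ : ∀ i j k l, B j i k l = B i j k l) (hB₂ : ∀ i j k l, B k l i j = B i j k l)
    (w : ι → R) :
    ∑ i, ∑ j, ∑ k, ∑ l, B i j k l * (w i + w j - w k - w l) ^ 2 =
      4 * ∑ i, w i * ∑ j, ∑ k, ∑ l, B i j k l * (w i + w j - w k - w l) := by
  have hj : ∑ i, ∑ j, ∑ k, ∑ l, w j * (B i j k l * (w i + w j - w k - w l)) =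
      ∑ i, ∑ j, ∑ k, ∑ l, w i * (B i j k l * (w i + w j - w k - w l)) := by
    rw [Finset.sum_comm]
    congr! 4
    rw [hB₁]; ring
  have hk : ∑ i, ∑ j, ∑ k, ∑ l, w k * (B i j k l * (w i + w j - w k - w l)) =
      -∑ i, ∑ j, ∑ k, ∑ l, w i * (B i j k l * (w i + w j - w k - w l)) := by
    rw [← sum4_comm_pairs]
    simp only [← Finset.sum_neg_distrib]
    congr! 4
    rw [hB₂]; ring
  have hl : ∑ i, ∑ j, ∑ k, ∑ l, w l * (B i j k l * (w i + w j - w k - w l)) =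
      -∑ i, ∑ j, ∑ k, ∑ l, w j * (B i j k l * (w i + w j - w k - w l)) := by
    rw [← sum4_comm_pairs]
    simp only [← Finset.sum_neg_distrib]
    congr! 4
    rw [hB₂]; ring
  calc ∑ i, ∑ j, ∑ k, ∑ l, B i j k l * (w i + w j - w k - w l) ^ 2
      = ∑ i, ∑ j, ∑ k, ∑ l, (w i * (B i j k l * (w i + w j - w k - w l))
          + w j * (B i j k l * (w i + w j - w k - w l))
          - w k * (B i j k l * (w i + w j - w k - w l))
          - w l * (B i j k l * (w i + w j - w k - w l))) := by
        congr! 4; ring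
    _ = 4 * ∑ i, ∑ j, ∑ k, ∑ l, w i * (B i j k l * (w i + w j - w k - w l)) := by
        simp only [Finset.sum_add_distrib, Finset.sum_sub_distrib]
        rw [hj, hk, hl, hj]; ring
    _ = 4 * ∑ i, w i * ∑ j, ∑ k, ∑ l, B i j k l * (w i + w j - w k - w l) := by
        simp only [Finset.mul_sum]

theorem mul_collision_eq_zero_of_sum_eq_zero [CommRing R] [LinearOrder R] [IsStrictOrderedRing R]
    {B : ι → ι → ι → ι → R} (hB : ∀ i j k l, 0 ≤ B i j k l)
    (hB₁ : ∀ i j k l, B j i k l = B i j k l) (hB₂ : ∀ i j k l, B k l i j = B i j k l)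
    {w : ι → R} (h : ∀ i, ∑ j, ∑ k, ∑ l, B i j k l * (w i + w j - w k - w l) = 0)
    (i j k l : ι) : B i j k l * (w i + w j - w k - w l) = 0 := by
  have hsq : ∑ i, ∑ j, ∑ k, ∑ l, B i j k l * (w i + w j - w k - w l) ^ 2 = 0 := by
    simp [sum4_mul_sq_collision hB₁ hB₂, h]
  have hterm := eq_zero_of_sum4_eq_zero (fun i j k l => mul_nonneg (hB i j k l) (sq_nonneg _))
    hsq i j k l
  exact pow_eq_zero_iff two_ne_zero |>.1 (by linear_combination B i j k l * hterm)

end CollisionSums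

theorem Real.sqrt_div_eq_div_sqrt_mul {a : ℝ} (ha : 0 ≤ a) (b : ℝ) :
    √(b / a) = b / √(a * b) := by
  rw [Real.sqrt_div' b ha, Real.sqrt_mul ha, div_mul_eq_div_div_swap, Real.div_sqrt]

section Boltzmann

variable {m : ℕ} {α : Fin m → ℝ} {A : Fin m → Fin m → Fin m → Fin m → ℝ} {M : Fin m → ℝ}

theorem Qop_maxwellian_mul (hsym3 : ∀ i j k l, A k l i j = A i j k l)
    (hMax : ∀ i j k l, A i j k l * (M i * M j - M k * M l) = 0) (w : Fin m → ℝ) (i : Fin m) :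
    Qop α A M (fun i => M i * w i) i =
      -(1 / (2 * α i)) * ∑ j, ∑ k, ∑ l, A i j k l * (M i * M j) * (w i + w j - w k - w l) := by
  simp only [Qop, neg_mul, ← mul_neg, ← Finset.sum_neg_distrib]
  congr! 4 with j - k - l -
  rw [hsym3 i j k l]
  linear_combination (-(w k + w l)) * hMax i j k l

theorem Qop_mul_self_of_collision_invariant (hsym3 : ∀ i j k l, A k l i j = A i j k l)
    (hMax : ∀ i j k l, A i j k l * (M i * M j - M k * M l) = 0) {w : Fin m → ℝ}
    (hw : ∀ i j k l, A i j k l * (w i + w j - w k - w l) = 0) :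
    Qop α A (fun i => M i * w i) (fun i => M i * w i) = -Qop α A M (fun i => M i * w i ^ 2) := by
  funext i
  simp only [Qop, Pi.neg_apply, ← mul_neg, ← Finset.sum_neg_distrib]
  congr! 4 with j - k - l -
  rw [hsym3 i j k l]
  linear_combination (-(w i + w j) ^ 2) * hMax i j k l
    - (M k * M l * (w i + w j + w k + w l)) * hw i j k l

theorem collision_invariant_of_Qop_maxwellian_mul_eq_zero (hα : ∀ i, 0 < α i)
    (hA : ∀ i j k l, 0 ≤ A i j k l) (hsym2 : ∀ i j k l, A j i k l = A i j k l)
    (hsym3 : ∀ i j k l, A k l i j = A i j k l) (hM : ∀ i, 0 < M i)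
    (hMax : ∀ i j k l, A i j k l * (M i * M j - M k * M l) = 0) {w : Fin m → ℝ}
    (h : Qop α A M (fun i => M i * w i) = 0) (i j k l : Fin m) :
    A i j k l * (w i + w j - w k - w l) = 0 := by
  have hB := mul_collision_eq_zero_of_sum_eq_zero
    (B := fun i j k l => A i j k l * (M i * M j)) (w := w)
    (fun i j k l => mul_nonneg (hA i j k l) (mul_pos (hM i) (hM j)).le)
    (fun i j k l => by rw [hsym2, mul_comm (M j)])
    (fun i j k l => by rw [hsym3]; linear_combination -hMax i j k l)
    (fun i => ?_) i j k l
  · rw [mul_right_comm] at hB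
    exact (mul_eq_zero.1 hB).resolve_right (mul_pos (hM i) (hM j)).ne'
  · have hi := congrFun h i
    rw [Qop_maxwellian_mul hsym3 hMax, Pi.zero_apply] at hi
    exact (mul_eq_zero.1 hi).resolve_left (neg_ne_zero.2 (by have := hα i; positivity))

theorem Qop_eq_zero_of_Lop_eq_zero (hα : ∀ i, 0 < α i) (hM : ∀ i, 0 < M i) {f : Fin m → ℝ}
    (h : Lop α A M f = 0) : Qop α A M (sqrtLam α M f) = 0 := by
  funext i
  have hi := congrFun h i
  simp only [Lop, invSqrtLam, Pi.smul_apply, smul_eq_mul, Pi.zero_apply] at hi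
  simpa [(Real.sqrt_pos.2 (div_pos (hM i) (hα i))).ne'] using hi

end Boltzmann

theorem Gam_eq_half_Lop_of_ker_general {m : ℕ}
    (α : Fin m → ℝ) (hα : ∀ i, 0 < α i)
    (A : Fin m → Fin m → Fin m → Fin m → ℝ) (hA : ∀ i j k l, 0 ≤ A i j k l)
    (hsym2 : ∀ i j k l, A j i k l = A i j k l)
    (hsym3 : ∀ i j k l, A k l i j = A i j k l)
    (M : Fin m → ℝ) (hM : ∀ i, 0 < M i)
    (hMax : ∀ i j k l, A i j k l * (M i * M j - M k * M l) = 0)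
    (f : Fin m → ℝ) (hf : Lop α A M f = 0) :
    Gam α A M f f =
      (1 / 2 : ℝ) • Lop α A M (fun i => (f i) ^ 2 / Real.sqrt (α i * M i)) := by
  set w : Fin m → ℝ := fun i => f i / √(α i * M i)
  have hsqrt (i : Fin m) : √(M i / α i) = M i / √(α i * M i) :=
    Real.sqrt_div_eq_div_sqrt_mul (hα i).le (M i)
  have hf₁ : sqrtLam α M f = fun i => M i * w i := by
    funext i; simp only [sqrtLam, hsqrt, w]; ring
  have hf₂ : sqrtLam α M (fun i => f i ^ 2 / √(α i * M i)) = fun i => M i * w i ^ 2 := by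
    funext i; simp only [sqrtLam, hsqrt, w]; ring
  have hw := collision_invariant_of_Qop_maxwellian_mul_eq_zero hα hA hsym2 hsym3 hM hMax
    (hf₁ ▸ Qop_eq_zero_of_Lop_eq_zero hα hM hf)
  rw [Gam, Lop, hf₁, hf₂, Qop_mul_self_of_collision_invariant hsym3 hMax hw]
  funext i
  simp only [invSqrtLam, Pi.neg_apply, Pi.smul_apply, smul_eq_mul]
  ring

/-- Lemma 5: if `Lf = 0` then `Γ(f,f) = (1/2) L (f²/√(αM))`, where
`f²/√(αM)` has components `f_i² / √(α_i M_i)`. -/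
theorem Gam_eq_half_Lop_of_ker {m : ℕ} (hm : 1 ≤ m)
    (α : Fin m → ℝ) (hα : ∀ i, 0 < α i)
    (A : Fin m → Fin m → Fin m → Fin m → ℝ) (hA : ∀ i j k l, 0 ≤ A i j k l)
    (hsym1 : ∀ i j k l, A i j l k = A i j k l)
    (hsym2 : ∀ i j k l, A j i k l = A i j k l)
    (hsym3 : ∀ i j k l, A k l i j = A i j k l)
    (M : Fin m → ℝ) (hM : ∀ i, 0 < M i)
    (hMax : ∀ i j k l, A i j k l * (M i * M j - M k * M l) = 0)
    (f : Fin m → ℝ) (hf : Lop α A M f = 0) :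
    Gam α A M f f =
      (1 / 2 : ℝ) • Lop α A M (fun i => (f i) ^ 2 / Real.sqrt (α i * M i)) :=
  Gam_eq_half_Lop_of_ker_general α hα A hA hsym2 hsym3 M hM hMax f hf
end

section
/- (Remark 2) Let f ∈ ℝ^m satisfy Lf = 0 and L( f²/√(αM) ) = 0, where f²/√(αM) denotes the vector with components f_i² / √(α_i M_i). Then Γ(f,f) = 0. -/
open Finset

lemma sum4_eq_prod {m : ℕ} (F : Fin m → Fin m → Fin m → Fin m → ℝ) :
    (∑ i, ∑ j, ∑ k, ∑ l, F i j k l)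
      = ∑ p : Fin m × Fin m × Fin m × Fin m, F p.1 p.2.1 p.2.2.1 p.2.2.2 := by
  simp [Fintype.sum_prod_type]

lemma sum4_swap12 {m : ℕ} (F : Fin m → Fin m → Fin m → Fin m → ℝ) :
    (∑ i, ∑ j, ∑ k, ∑ l, F i j k l) = ∑ i, ∑ j, ∑ k, ∑ l, F j i k l :=
  Finset.sum_comm

lemma sum4_swap_pairs {m : ℕ} (F : Fin m → Fin m → Fin m → Fin m → ℝ) :
    (∑ i, ∑ j, ∑ k, ∑ l, F i j k l) = ∑ i, ∑ j, ∑ k, ∑ l, F k l i j := by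
  rw [sum4_eq_prod, sum4_eq_prod]
  exact Fintype.sum_bijective (fun p => (p.2.2.1, p.2.2.2, p.1, p.2.1))
    (Function.Involutive.bijective (fun p => rfl)) _ _ (fun p => rfl)

lemma key_lemma {m : ℕ}
    (A : Fin m → Fin m → Fin m → Fin m → ℝ) (hA : ∀ i j k l, 0 ≤ A i j k l)
    (hsym2 : ∀ i j k l, A j i k l = A i j k l)
    (hsym3 : ∀ i j k l, A k l i j = A i j k l)
    (M : Fin m → ℝ) (hM : ∀ i, 0 < M i)
    (hMax : ∀ i j k l, A i j k l * (M i * M j - M k * M l) = 0)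
    (w : Fin m → ℝ)
    (h0 : ∀ i, ∑ j, ∑ k, ∑ l,
        A i j k l * (M k * M l) * (w k + w l - w i - w j) = 0) :
    ∀ i j k l, A i j k l * (w i + w j - w k - w l) = 0 := by
  set B : Fin m → Fin m → Fin m → Fin m → ℝ := fun i j k l => A i j k l * (M k * M l) with hB
  set Φ : Fin m → Fin m → Fin m → Fin m → ℝ := fun i j k l => w i + w j - w k - w l with hΦ
  have hB12 : ∀ i j k l, B j i k l = B i j k l := fun i j k l => by
    simp only [hB, hsym2]
  have hBpair : ∀ i j k l, B k l i j = B i j k l := fun i j k l => by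
    simp only [hB, hsym3]
    linear_combination hMax i j k l
  have hTi : ∀ i, ∑ j, ∑ k, ∑ l, B i j k l * Φ i j k l = 0 := by
    intro i
    have h2 : (∑ j, ∑ k, ∑ l, B i j k l * Φ i j k l)
        = ∑ j, ∑ k, ∑ l, -(A i j k l * (M k * M l) * (w k + w l - w i - w j)) :=
      Finset.sum_congr rfl fun j _ => Finset.sum_congr rfl fun k _ =>
        Finset.sum_congr rfl fun l _ => by simp only [hB, hΦ]; ring
    rw [h2]
    simp [h0 i]
  have hS1 : (∑ i, ∑ j, ∑ k, ∑ l, B i j k l * (w i * Φ i j k l)) = 0 := by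
    apply Finset.sum_eq_zero
    intro i _
    have h3 : (∑ j, ∑ k, ∑ l, B i j k l * (w i * Φ i j k l))
        = w i * ∑ j, ∑ k, ∑ l, B i j k l * Φ i j k l := by
      simp only [Finset.mul_sum]
      exact Finset.sum_congr rfl fun j _ => Finset.sum_congr rfl fun k _ =>
        Finset.sum_congr rfl fun l _ => by ring
    rw [h3, hTi i, mul_zero]
  have hS2 : (∑ i, ∑ j, ∑ k, ∑ l, B i j k l * (w j * Φ i j k l)) = 0 := by
    rw [sum4_swap12 (fun i j k l => B i j k l * (w j * Φ i j k l))]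
    rw [show (∑ i, ∑ j, ∑ k, ∑ l, B j i k l * (w i * Φ j i k l))
        = ∑ i, ∑ j, ∑ k, ∑ l, B i j k l * (w i * Φ i j k l) from
      Finset.sum_congr rfl fun i _ => Finset.sum_congr rfl fun j _ =>
        Finset.sum_congr rfl fun k _ => Finset.sum_congr rfl fun l _ => by
          rw [hB12]; simp only [hΦ]; ring]
    exact hS1
  have hS3 : (∑ i, ∑ j, ∑ k, ∑ l, B i j k l * (w k * Φ i j k l)) = 0 := by
    rw [sum4_swap_pairs (fun i j k l => B i j k l * (w k * Φ i j k l))]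
    rw [show (∑ i, ∑ j, ∑ k, ∑ l, B k l i j * (w i * Φ k l i j))
        = ∑ i, ∑ j, ∑ k, ∑ l, -(B i j k l * (w i * Φ i j k l)) from
      Finset.sum_congr rfl fun i _ => Finset.sum_congr rfl fun j _ =>
        Finset.sum_congr rfl fun k _ => Finset.sum_congr rfl fun l _ => by
          rw [hBpair]; simp only [hΦ]; ring]
    simp only [Finset.sum_neg_distrib]; rw [hS1, neg_zero]
  have hS4 : (∑ i, ∑ j, ∑ k, ∑ l, B i j k l * (w l * Φ i j k l)) = 0 := by
    rw [sum4_swap_pairs (fun i j k l => B i j k l * (w l * Φ i j k l))]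
    rw [show (∑ i, ∑ j, ∑ k, ∑ l, B k l i j * (w j * Φ k l i j))
        = ∑ i, ∑ j, ∑ k, ∑ l, -(B i j k l * (w j * Φ i j k l)) from
      Finset.sum_congr rfl fun i _ => Finset.sum_congr rfl fun j _ =>
        Finset.sum_congr rfl fun k _ => Finset.sum_congr rfl fun l _ => by
          rw [hBpair]; simp only [hΦ]; ring]
    simp only [Finset.sum_neg_distrib]; rw [hS2, neg_zero]
  have hS : (∑ i, ∑ j, ∑ k, ∑ l, B i j k l * (Φ i j k l) ^ 2) = 0 := by
    have hsplit : (∑ i, ∑ j, ∑ k, ∑ l, B i j k l * (Φ i j k l) ^ 2)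
        = (∑ i, ∑ j, ∑ k, ∑ l, (B i j k l * (w i * Φ i j k l)
            + B i j k l * (w j * Φ i j k l)
            - B i j k l * (w k * Φ i j k l)
            - B i j k l * (w l * Φ i j k l))) :=
      Finset.sum_congr rfl fun i _ => Finset.sum_congr rfl fun j _ =>
        Finset.sum_congr rfl fun k _ => Finset.sum_congr rfl fun l _ => by
          simp only [hΦ]; ring
    rw [hsplit]
    simp only [Finset.sum_add_distrib, Finset.sum_sub_distrib]
    rw [hS1, hS2, hS3, hS4]; ring
  rw [sum4_eq_prod] at hS
  have hz := (Finset.sum_eq_zero_iff_of_nonneg (fun p _ => by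
    exact mul_nonneg (mul_nonneg (hA _ _ _ _) (mul_pos (hM _) (hM _)).le) (sq_nonneg _))).mp hS
  intro i j k l
  have hpt := hz (i, j, k, l) (Finset.mem_univ _)
  simp only [hB, hΦ] at hpt
  rcases mul_eq_zero.mp hpt with h | h
  · rcases mul_eq_zero.mp h with h' | h'
    · rw [h', zero_mul]
    · exact absurd h' (ne_of_gt (mul_pos (hM k) (hM l)))
  · rw [pow_eq_zero_iff (two_ne_zero)] at h
    rw [h, mul_zero]

lemma key_sqrt {m : ℕ} (α M : Fin m → ℝ) (hα : ∀ i, 0 < α i) (hM : ∀ i, 0 < M i) (i : Fin m) :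
    Real.sqrt (M i / α i) = M i / Real.sqrt (α i * M i) := by
  have h1 : (M i / Real.sqrt (α i * M i)) ^ 2 = M i / α i := by
    rw [div_pow, Real.sq_sqrt (mul_pos (hα i) (hM i)).le]
    rw [div_eq_div_iff (mul_pos (hα i) (hM i)).ne' (hα i).ne']
    ring
  rw [← h1, Real.sqrt_sq (div_nonneg (hM i).le (Real.sqrt_nonneg _))]

lemma sqrtLam_eq {m : ℕ} (α M : Fin m → ℝ) (hα : ∀ i, 0 < α i) (hM : ∀ i, 0 < M i)
    (g : Fin m → ℝ) (i : Fin m) :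
    sqrtLam α M g i = M i * (g i / Real.sqrt (α i * M i)) := by
  unfold sqrtLam
  rw [key_sqrt α M hα hM i, div_mul_eq_mul_div, mul_div_assoc]

lemma h0_of_L {m : ℕ} (α : Fin m → ℝ) (hα : ∀ i, 0 < α i)
    (A : Fin m → Fin m → Fin m → Fin m → ℝ)
    (hsym3 : ∀ i j k l, A k l i j = A i j k l)
    (M : Fin m → ℝ) (hM : ∀ i, 0 < M i)
    (hMax : ∀ i j k l, A i j k l * (M i * M j - M k * M l) = 0)
    (g : Fin m → ℝ) (hg : Lop α A M g = 0) :
    ∀ i, ∑ j, ∑ k, ∑ l, A i j k l * (M k * M l) *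
      (g k / Real.sqrt (α k * M k) + g l / Real.sqrt (α l * M l)
        - g i / Real.sqrt (α i * M i) - g j / Real.sqrt (α j * M j)) = 0 := by
  intro i
  have h1 := congrFun hg i
  simp only [Lop, Pi.smul_apply, Pi.zero_apply, smul_eq_mul, invSqrtLam] at h1
  have hspos : (0:ℝ) < Real.sqrt (M i / α i) := Real.sqrt_pos.mpr (div_pos (hM i) (hα i))
  have hQ : Qop α A M (sqrtLam α M g) i = 0 := by
    rcases mul_eq_zero.mp h1 with h | h
    · norm_num at h
    · rcases mul_eq_zero.mp h with h' | h'
      · exact absurd h' (inv_ne_zero (ne_of_gt hspos))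
      · exact h'
  unfold Qop at hQ
  rcases mul_eq_zero.mp hQ with h | h
  · exfalso
    have hαi := hα i
    have : (0:ℝ) < 1 / (2 * α i) := by positivity
    exact (ne_of_gt this) h
  · rw [← h]
    refine Finset.sum_congr rfl fun j _ => Finset.sum_congr rfl fun k _ =>
      Finset.sum_congr rfl fun l _ => ?_
    rw [hsym3 i j k l, sqrtLam_eq α M hα hM g i, sqrtLam_eq α M hα hM g j,
      sqrtLam_eq α M hα hM g k, sqrtLam_eq α M hα hM g l]
    linear_combination (g i / Real.sqrt (α i * M i) + g j / Real.sqrt (α j * M j)) *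
      hMax i j k l

/-- Remark 2: if `Lf = 0` and `L(f²/√(αM)) = 0` then `Γ(f,f) = 0`. -/
theorem Gam_eq_zero_of_ker {m : ℕ} (hm : 1 ≤ m)
    (α : Fin m → ℝ) (hα : ∀ i, 0 < α i)
    (A : Fin m → Fin m → Fin m → Fin m → ℝ) (hA : ∀ i j k l, 0 ≤ A i j k l)
    (hsym1 : ∀ i j k l, A i j l k = A i j k l)
    (hsym2 : ∀ i j k l, A j i k l = A i j k l)
    (hsym3 : ∀ i j k l, A k l i j = A i j k l)
    (M : Fin m → ℝ) (hM : ∀ i, 0 < M i)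
    (hMax : ∀ i j k l, A i j k l * (M i * M j - M k * M l) = 0)
    (f : Fin m → ℝ) (hf : Lop α A M f = 0)
    (hf2 : Lop α A M (fun i => (f i) ^ 2 / Real.sqrt (α i * M i)) = 0) :
    Gam α A M f f = 0 := by
  set u : Fin m → ℝ := fun x => f x / Real.sqrt (α x * M x) with hu
  have ha : ∀ i j k l, A i j k l * (u i + u j - u k - u l) = 0 :=
    key_lemma A hA hsym2 hsym3 M hM hMax u
      (h0_of_L α hα A hsym3 M hM hMax f hf)
  have hb : ∀ i j k l, A i j k l * ((u i) ^ 2 + (u j) ^ 2 - (u k) ^ 2 - (u l) ^ 2) = 0 := by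
    have hw2 : ∀ x, f x ^ 2 / Real.sqrt (α x * M x) / Real.sqrt (α x * M x) = (u x) ^ 2 := by
      intro x
      rw [hu]
      rw [div_div, div_pow, sq (Real.sqrt (α x * M x))]
    have hb' := key_lemma A hA hsym2 hsym3 M hM hMax
      (fun x => (f x ^ 2 / Real.sqrt (α x * M x)) / Real.sqrt (α x * M x))
      (h0_of_L α hα A hsym3 M hM hMax (fun x => f x ^ 2 / Real.sqrt (α x * M x)) hf2)
    intro i j k l
    have := hb' i j k l
    simpa only [hw2] using this
  funext i
  show (Real.sqrt (M i / α i))⁻¹ * Qop α A (sqrtLam α M f) (sqrtLam α M f) i = 0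
  have hQ : Qop α A (sqrtLam α M f) (sqrtLam α M f) i = 0 := by
    show (1 / (2 * α i)) * _ = 0
    rw [show (∑ j, ∑ k, ∑ l,
        (A i j k l * (sqrtLam α M f k * sqrtLam α M f l + sqrtLam α M f l * sqrtLam α M f k)
          - A k l i j * (sqrtLam α M f i * sqrtLam α M f j
            + sqrtLam α M f j * sqrtLam α M f i))) = 0 from ?_, mul_zero]
    refine Finset.sum_eq_zero fun j _ => Finset.sum_eq_zero fun k _ =>
      Finset.sum_eq_zero fun l _ => ?_
    rw [hsym3 i j k l, sqrtLam_eq α M hα hM f i, sqrtLam_eq α M hα hM f j,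
      sqrtLam_eq α M hα hM f k, sqrtLam_eq α M hα hM f l]
    have hai := ha i j k l
    have hbi := hb i j k l
    simp only [hu] at hai hbi
    linear_combination (-(M k * M l) * (f i / Real.sqrt (α i * M i) + f j / Real.sqrt (α j * M j)
        + f k / Real.sqrt (α k * M k) + f l / Real.sqrt (α l * M l))) * hai
      + (M k * M l) * hbi
      + (-2 * (f i / Real.sqrt (α i * M i)) * (f j / Real.sqrt (α j * M j))) * hMax i j k l
  rw [hQ, mul_zero]
end

section
/- There exists a constant C₁ > 0 such that for all f ∈ ℝ^m, ⟨Lf, f⟩ ≥ C₁ |P^⊥ f|², where P^⊥ denotes the orthogonal projection of ℝ^m onto the orthogonal complement of the null space of L. -/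
open Finset

/-! ### Auxiliary machinery: quadruple sums -/

noncomputable def S4 {m : ℕ} (F : Fin m → Fin m → Fin m → Fin m → ℝ) : ℝ :=
  ∑ i, ∑ j, ∑ k, ∑ l, F i j k l

lemma S4_congr {m : ℕ} {F G : Fin m → Fin m → Fin m → Fin m → ℝ}
    (h : ∀ i j k l, F i j k l = G i j k l) : S4 F = S4 G := by
  simp only [S4]
  exact Finset.sum_congr rfl fun i _ => Finset.sum_congr rfl fun j _ =>
    Finset.sum_congr rfl fun k _ => Finset.sum_congr rfl fun l _ => h i j k l

lemma S4_add {m : ℕ} (F G : Fin m → Fin m → Fin m → Fin m → ℝ) :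
    S4 (fun i j k l => F i j k l + G i j k l) = S4 F + S4 G := by
  simp [S4, Finset.sum_add_distrib]

lemma S4_sub {m : ℕ} (F G : Fin m → Fin m → Fin m → Fin m → ℝ) :
    S4 (fun i j k l => F i j k l - G i j k l) = S4 F - S4 G := by
  simp [S4, Finset.sum_sub_distrib]

lemma S4_neg {m : ℕ} (F : Fin m → Fin m → Fin m → Fin m → ℝ) :
    S4 (fun i j k l => -F i j k l) = -S4 F := by
  simp [S4]

lemma S4_nonneg {m : ℕ} {F : Fin m → Fin m → Fin m → Fin m → ℝ}
    (h : ∀ i j k l, 0 ≤ F i j k l) : 0 ≤ S4 F :=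
  Finset.sum_nonneg fun i _ => Finset.sum_nonneg fun j _ =>
    Finset.sum_nonneg fun k _ => Finset.sum_nonneg fun l _ => h i j k l

lemma S4_prod {m : ℕ} (F : Fin m → Fin m → Fin m → Fin m → ℝ) :
    S4 F = ∑ p : (Fin m × Fin m) × Fin m × Fin m, F p.1.1 p.1.2 p.2.1 p.2.2 := by
  simp [S4, Fintype.sum_prod_type]

lemma S4_swap12 {m : ℕ} (F : Fin m → Fin m → Fin m → Fin m → ℝ) :
    S4 F = S4 (fun i j k l => F j i k l) := by
  rw [S4_prod, S4_prod]
  exact Fintype.sum_equiv ((Equiv.prodComm (Fin m) (Fin m)).prodCongr (Equiv.refl _))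
    _ _ (fun p => rfl)

lemma S4_swap34 {m : ℕ} (F : Fin m → Fin m → Fin m → Fin m → ℝ) :
    S4 F = S4 (fun i j k l => F i j l k) := by
  rw [S4_prod, S4_prod]
  exact Fintype.sum_equiv ((Equiv.refl (Fin m × Fin m)).prodCongr (Equiv.prodComm (Fin m) (Fin m)))
    _ _ (fun p => rfl)

lemma S4_swapPairs {m : ℕ} (F : Fin m → Fin m → Fin m → Fin m → ℝ) :
    S4 F = S4 (fun i j k l => F k l i j) := by
  rw [S4_prod, S4_prod]
  exact Fintype.sum_equiv (Equiv.prodComm _ _) _ _ (fun p => rfl)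

/-- Symmetrization lemma. -/
lemma S4_symmetrize {m : ℕ} (W : Fin m → Fin m → Fin m → Fin m → ℝ)
    (hW12 : ∀ i j k l, W j i k l = W i j k l)
    (hW34 : ∀ i j k l, W i j l k = W i j k l)
    (hWp : ∀ i j k l, W k l i j = W i j k l)
    (φ ψ : Fin m → ℝ) :
    S4 (fun i j k l => W i j k l * (ψ i * (φ i + φ j - φ k - φ l)))
      = (1/4) * S4 (fun i j k l =>
          W i j k l * ((φ i + φ j - φ k - φ l) * (ψ i + ψ j - ψ k - ψ l))) := by
  have h1 : S4 (fun i j k l => W i j k l * (ψ j * (φ i + φ j - φ k - φ l)))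
      = S4 (fun i j k l => W i j k l * (ψ i * (φ i + φ j - φ k - φ l))) := by
    rw [S4_swap12 (fun i j k l => W i j k l * (ψ j * (φ i + φ j - φ k - φ l)))]
    exact S4_congr fun i j k l => by rw [hW12]; ring
  have h2 : S4 (fun i j k l => W i j k l * (ψ k * (φ i + φ j - φ k - φ l)))
      = - S4 (fun i j k l => W i j k l * (ψ i * (φ i + φ j - φ k - φ l))) := by
    rw [S4_swapPairs (fun i j k l => W i j k l * (ψ k * (φ i + φ j - φ k - φ l)))]
    rw [show (fun i j k l => W k l i j * (ψ i * (φ k + φ l - φ i - φ j)))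
        = (fun i j k l => -(W i j k l * (ψ i * (φ i + φ j - φ k - φ l)))) from
      funext fun i => funext fun j => funext fun k => funext fun l => by rw [hWp]; ring]
    exact S4_neg _
  have h3 : S4 (fun i j k l => W i j k l * (ψ l * (φ i + φ j - φ k - φ l)))
      = - S4 (fun i j k l => W i j k l * (ψ i * (φ i + φ j - φ k - φ l))) := by
    rw [S4_swap34 (fun i j k l => W i j k l * (ψ l * (φ i + φ j - φ k - φ l)))]
    rw [show (fun i j k l => W i j l k * (ψ k * (φ i + φ j - φ l - φ k)))
        = (fun i j k l => W i j k l * (ψ k * (φ i + φ j - φ k - φ l))) from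
      funext fun i => funext fun j => funext fun k => funext fun l => by rw [hW34]; ring]
    exact h2
  have hsplit : S4 (fun i j k l =>
      W i j k l * ((φ i + φ j - φ k - φ l) * (ψ i + ψ j - ψ k - ψ l)))
      = S4 (fun i j k l => W i j k l * (ψ i * (φ i + φ j - φ k - φ l)))
        + S4 (fun i j k l => W i j k l * (ψ j * (φ i + φ j - φ k - φ l)))
        - (S4 (fun i j k l => W i j k l * (ψ k * (φ i + φ j - φ k - φ l)))
        + S4 (fun i j k l => W i j k l * (ψ l * (φ i + φ j - φ k - φ l)))) := by
    rw [← S4_add, ← S4_add, ← S4_sub]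
    exact S4_congr fun i j k l => by ring
  rw [hsplit, h1, h2, h3]
  ring

/-- The rescaled coordinates `dd f p = f p / (α p * sqrt (M p / α p))`. -/
noncomputable def dd {m : ℕ} (α M : Fin m → ℝ) (f : Fin m → ℝ) (p : Fin m) : ℝ :=
  f p * (α p * Real.sqrt (M p / α p))⁻¹

lemma inner_Lop_eq {m : ℕ}
    (α : Fin m → ℝ) (hα : ∀ i, 0 < α i)
    (A : Fin m → Fin m → Fin m → Fin m → ℝ)
    (hsym3 : ∀ i j k l, A k l i j = A i j k l)
    (M : Fin m → ℝ) (hM : ∀ i, 0 < M i)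
    (hMax : ∀ i j k l, A i j k l * (M i * M j - M k * M l) = 0)
    (f g : Fin m → ℝ) :
    (∑ i, Lop α A M f i * g i)
      = S4 (fun i j k l => A i j k l * (M k * M l) *
          (dd α M g i * (dd α M f i + dd α M f j - dd α M f k - dd α M f l))) := by
  have hs_pos : ∀ p, 0 < Real.sqrt (M p / α p) :=
    fun p => Real.sqrt_pos.mpr (div_pos (hM p) (hα p))
  have hMs : ∀ p, α p * Real.sqrt (M p / α p) ^ 2 = M p := by
    intro p
    rw [Real.sq_sqrt (le_of_lt (div_pos (hM p) (hα p))), mul_comm,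
      div_mul_cancel₀ _ (hα p).ne']
  simp only [S4]
  refine Finset.sum_congr rfl fun i _ => ?_
  simp only [Lop, invSqrtLam, Qop, sqrtLam, Pi.smul_apply, smul_eq_mul]
  rw [show ∀ a b c d : ℝ, (-2) * (a * (1 / (2 * c) * b)) * d = (-(a / c) * d) * b by
    intros; ring]
  rw [Finset.mul_sum]
  refine Finset.sum_congr rfl fun j _ => ?_
  rw [Finset.mul_sum]
  refine Finset.sum_congr rfl fun k _ => ?_
  rw [Finset.mul_sum]
  refine Finset.sum_congr rfl fun l _ => ?_
  rw [hsym3 i j k l]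
  trans (dd α M g i * (A i j k l * ((M i * M j) * (dd α M f i + dd α M f j)
      - (M k * M l) * (dd α M f k + dd α M f l))))
  · simp only [dd]
    generalize hqi : Real.sqrt (M i / α i) = si
    generalize hqj : Real.sqrt (M j / α j) = sj
    generalize hqk : Real.sqrt (M k / α k) = sk
    generalize hql : Real.sqrt (M l / α l) = sl
    have hi : si ≠ 0 := hqi ▸ (hs_pos i).ne'
    have hj : sj ≠ 0 := hqj ▸ (hs_pos j).ne'
    have hk : sk ≠ 0 := hqk ▸ (hs_pos k).ne'
    have hl : sl ≠ 0 := hql ▸ (hs_pos l).ne'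
    have hMi : M i = α i * si ^ 2 := by rw [← hqi, hMs]
    have hMj : M j = α j * sj ^ 2 := by rw [← hqj, hMs]
    have hMk : M k = α k * sk ^ 2 := by rw [← hqk, hMs]
    have hMl : M l = α l * sl ^ 2 := by rw [← hql, hMs]
    rw [hMi, hMj, hMk, hMl]
    have hai := (hα i).ne'
    have haj := (hα j).ne'
    have hak := (hα k).ne'
    have hal := (hα l).ne'
    field_simp
    ring
  · linear_combination (dd α M g i * (dd α M f i + dd α M f j)) * hMax i j k l

/-- The Dirichlet-form representation of `⟨Lf, g⟩`. -/
lemma inner_Lop_quarter {m : ℕ}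
    (α : Fin m → ℝ) (hα : ∀ i, 0 < α i)
    (A : Fin m → Fin m → Fin m → Fin m → ℝ)
    (hsym1 : ∀ i j k l, A i j l k = A i j k l)
    (hsym2 : ∀ i j k l, A j i k l = A i j k l)
    (hsym3 : ∀ i j k l, A k l i j = A i j k l)
    (M : Fin m → ℝ) (hM : ∀ i, 0 < M i)
    (hMax : ∀ i j k l, A i j k l * (M i * M j - M k * M l) = 0)
    (f g : Fin m → ℝ) :
    (∑ i, Lop α A M f i * g i)
      = (1/4) * S4 (fun i j k l => A i j k l * (M k * M l) *
          ((dd α M f i + dd α M f j - dd α M f k - dd α M f l) *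
           (dd α M g i + dd α M g j - dd α M g k - dd α M g l))) := by
  rw [inner_Lop_eq α hα A hsym3 M hM hMax f g]
  exact S4_symmetrize (fun i j k l => A i j k l * (M k * M l))
    (fun i j k l => by
      show A j i k l * (M k * M l) = A i j k l * (M k * M l); rw [hsym2])
    (fun i j k l => by
      show A i j l k * (M l * M k) = A i j k l * (M k * M l); rw [hsym1]; ring)
    (fun i j k l => by
      show A k l i j * (M i * M j) = A i j k l * (M k * M l)
      rw [hsym3]; linear_combination hMax i j k l)
    (dd α M f) (dd α M g)

set_option maxHeartbeats 1000000 in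
/-- there is `C₁ > 0` with `⟨Lf, f⟩ ≥ C₁ |P^⊥ f|²`, where `P^⊥ f` is the
orthogonal projection of `f` onto the orthogonal complement of the null space of `L`;
equivalently, for every decomposition `f = u + v` with `Lu = 0` and `v` orthogonal to
the null space of `L`, one has `⟨Lf, f⟩ ≥ C₁ |v|²`. -/
theorem Lop_spectral_gap {m : ℕ} (hm : 1 ≤ m)
    (α : Fin m → ℝ) (hα : ∀ i, 0 < α i)
    (A : Fin m → Fin m → Fin m → Fin m → ℝ) (hA : ∀ i j k l, 0 ≤ A i j k l)
    (hsym1 : ∀ i j k l, A i j l k = A i j k l)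
    (hsym2 : ∀ i j k l, A j i k l = A i j k l)
    (hsym3 : ∀ i j k l, A k l i j = A i j k l)
    (M : Fin m → ℝ) (hM : ∀ i, 0 < M i)
    (hMax : ∀ i j k l, A i j k l * (M i * M j - M k * M l) = 0) :
    ∃ C₁ : ℝ, 0 < C₁ ∧ ∀ f u v : Fin m → ℝ,
      Lop α A M u = 0 →
      (∀ h : Fin m → ℝ, Lop α A M h = 0 → ∑ i, v i * h i = 0) →
      f = u + v →
      C₁ * ∑ i, (v i) ^ 2 ≤ ∑ i, Lop α A M f i * f i := by
  set L : (Fin m → ℝ) → (Fin m → ℝ) := Lop α A M with hL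
  set t : (Fin m → ℝ) → (Fin m → ℝ) → ℝ := fun x y => ∑ i, L x i * y i with ht
  have hquarter := inner_Lop_quarter α hα A hsym1 hsym2 hsym3 M hM hMax
  -- symmetry
  have hsymm : ∀ x y, t x y = t y x := by
    intro x y
    show (∑ i, Lop α A M x i * y i) = ∑ i, Lop α A M y i * x i
    rw [hquarter x y, hquarter y x]
    congr 1
    exact S4_congr fun i j k l => by ring
  -- nonnegativity
  have hnn : ∀ x, 0 ≤ t x x := by
    intro x
    show 0 ≤ ∑ i, Lop α A M x i * x i
    rw [hquarter x x]
    refine mul_nonneg (by norm_num) (S4_nonneg fun i j k l => ?_)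
    exact mul_nonneg (mul_nonneg (hA i j k l) (mul_nonneg (hM k).le (hM l).le))
      (mul_self_nonneg _)
  -- second-argument linearity (trivial)
  have tadd : ∀ x y z, t x (y + z) = t x y + t x z := by
    intro x y z
    simp only [ht, Pi.add_apply, mul_add]
    exact Finset.sum_add_distrib
  have tsmul : ∀ (x : Fin m → ℝ) (c : ℝ) y, t x (c • y) = c * t x y := by
    intro x c y
    simp only [ht, Pi.smul_apply, smul_eq_mul]
    rw [Finset.mul_sum]
    exact Finset.sum_congr rfl fun i _ => by ring
  -- expansion of the quadratic form
  have hexp : ∀ x y, t (x + y) (x + y) = t x x + 2 * t x y + t y y := by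
    intro x y
    rw [tadd, hsymm (x + y) x, hsymm (x + y) y, tadd, tadd, hsymm y x]
    ring
  have hhom : ∀ (c : ℝ) x, t (c • x) (c • x) = c ^ 2 * t x x := by
    intro c x
    rw [tsmul, hsymm (c • x) x, tsmul, hsymm x]
    ring
  -- t x x = 0 → L x = 0
  have hker : ∀ x, t x x = 0 → L x = 0 := by
    intro x hx
    have key : ∀ y, t x y = 0 := by
      intro y
      by_contra hc
      set c := t x y with hcdef
      set d := t y y with hddef
      have hd : 0 ≤ d := hnn y
      have hs : ∀ s : ℝ, 0 ≤ 2 * (s * c) + s ^ 2 * d := by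
        intro s
        have h0 := hnn (x + s • y)
        rw [hexp x (s • y), hx, tsmul, hhom] at h0
        calc (0:ℝ) ≤ 0 + 2 * (s * c) + s ^ 2 * d := h0
          _ = 2 * (s * c) + s ^ 2 * d := by ring
      have hinst := hs (-c / (d + 1))
      have hd1 : (0:ℝ) < d + 1 := by linarith
      rw [div_mul_eq_mul_div, div_pow] at hinst
      have hcc : c ^ 2 > 0 := by positivity
      have expand : 2 * (-c * c / (d + 1)) + (-c) ^ 2 / (d + 1) ^ 2 * d
          = (c ^ 2 * (-(d + 2))) / (d + 1) ^ 2 := by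
        field_simp
        ring
      rw [expand] at hinst
      have : (c ^ 2 * (-(d + 2))) / (d + 1) ^ 2 < 0 := by
        apply div_neg_of_neg_of_pos
        · nlinarith
        · positivity
      linarith
    have hzero : t x (L x) = 0 := key (L x)
    have hsum : ∑ i, L x i * L x i = 0 := hzero
    funext i
    have hterm := (Finset.sum_eq_zero_iff_of_nonneg
      (fun i _ => mul_self_nonneg (L x i))).mp hsum i (Finset.mem_univ i)
    exact mul_self_eq_zero.mp hterm
  -- the orthogonality set and the unit sphere within it
  set V : Set (Fin m → ℝ) := {v | ∀ h, L h = 0 → ∑ i, v i * h i = 0} with hV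
  set S : Set (Fin m → ℝ) := V ∩ {v | ∑ i, (v i) ^ 2 = 1} with hSdef
  -- continuity of q
  have hq_cont : Continuous fun x : Fin m → ℝ => t x x := by
    have heq : (fun x : Fin m → ℝ => t x x) = fun x =>
        (1/4) * S4 (fun i j k l => A i j k l * (M k * M l) *
          ((dd α M x i + dd α M x j - dd α M x k - dd α M x l) *
           (dd α M x i + dd α M x j - dd α M x k - dd α M x l))) := by
      funext x; exact hquarter x x
    rw [heq]
    have hdd : ∀ p, Continuous fun x : Fin m → ℝ => dd α M x p := by
      intro p
      exact (continuous_apply p).mul continuous_const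
    refine continuous_const.mul ?_
    unfold S4
    refine continuous_finset_sum _ fun i _ => continuous_finset_sum _ fun j _ =>
      continuous_finset_sum _ fun k _ => continuous_finset_sum _ fun l _ => ?_
    exact continuous_const.mul
      (((((hdd i).add (hdd j)).sub (hdd k)).sub (hdd l)).mul
       ((((hdd i).add (hdd j)).sub (hdd k)).sub (hdd l)))
  -- S is compact
  have hV_closed : IsClosed V := by
    have hVeq : V = ⋂ (h : {h : Fin m → ℝ // L h = 0}),
        {v : Fin m → ℝ | ∑ i, v i * (h : Fin m → ℝ) i = 0} := by
      ext v
      simp only [hV, Set.mem_setOf_eq, Set.mem_iInter, Subtype.forall]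
    rw [hVeq]
    refine isClosed_iInter fun h => isClosed_eq ?_ continuous_const
    exact continuous_finset_sum _ fun i _ => (continuous_apply i).mul continuous_const
  have hS_closed : IsClosed S :=
    hV_closed.inter (isClosed_eq
      (continuous_finset_sum _ fun i _ => (continuous_apply i).pow 2) continuous_const)
  have hS_sub : S ⊆ Metric.closedBall 0 1 := by
    intro v hv
    rw [Metric.mem_closedBall, dist_zero_right]
    refine (pi_norm_le_iff_of_nonneg zero_le_one).mpr fun i => ?_
    rw [Real.norm_eq_abs]
    have hle : (v i) ^ 2 ≤ ∑ j, (v j) ^ 2 :=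
      Finset.single_le_sum (fun j _ => sq_nonneg (v j)) (Finset.mem_univ i)
    rw [hv.2] at hle
    nlinarith [sq_abs (v i), abs_nonneg (v i)]
  have hS_compact : IsCompact S :=
    (isCompact_closedBall (0 : Fin m → ℝ) 1).of_isClosed_subset hS_closed hS_sub
  -- normalization: nonzero elements of V give elements of S
  have hnormalize : ∀ v : Fin m → ℝ, v ∈ V → 0 < ∑ i, (v i) ^ 2 →
      ((Real.sqrt (∑ i, (v i) ^ 2))⁻¹ • v) ∈ S ∧
      t ((Real.sqrt (∑ i, (v i) ^ 2))⁻¹ • v) ((Real.sqrt (∑ i, (v i) ^ 2))⁻¹ • v)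
        = (∑ i, (v i) ^ 2)⁻¹ * t v v := by
    intro v hvV hr
    set r := ∑ i, (v i) ^ 2 with hrdef
    have hsr : Real.sqrt r > 0 := Real.sqrt_pos.mpr hr
    have hsr2 : (Real.sqrt r)⁻¹ ^ 2 = r⁻¹ := by
      rw [inv_pow, Real.sq_sqrt hr.le]
    constructor
    · constructor
      · intro h hh
        have := hvV h hh
        simp only [Pi.smul_apply, smul_eq_mul]
        calc ∑ i, (Real.sqrt r)⁻¹ * v i * h i
            = (Real.sqrt r)⁻¹ * ∑ i, v i * h i := by
              rw [Finset.mul_sum]; exact Finset.sum_congr rfl fun i _ => by ring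
          _ = 0 := by rw [this, mul_zero]
      · show (∑ i, ((Real.sqrt r)⁻¹ • v) i ^ 2) = 1
        have : ∀ i, ((Real.sqrt r)⁻¹ • v) i ^ 2 = (Real.sqrt r)⁻¹ ^ 2 * (v i) ^ 2 := by
          intro i; simp [Pi.smul_apply, smul_eq_mul]; ring
        rw [Finset.sum_congr rfl fun i _ => this i, ← Finset.mul_sum, hsr2, ← hrdef,
          inv_mul_cancel₀ hr.ne']
    · rw [hhom, hsr2]
  -- main case split
  by_cases hne : S.Nonempty
  · obtain ⟨v₀, hv₀S, hmin⟩ := hS_compact.exists_isMinOn hne hq_cont.continuousOn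
    refine ⟨t v₀ v₀, ?_, ?_⟩
    · rcases lt_or_eq_of_le (hnn v₀) with h | h
      · exact h
      · exfalso
        have hLv₀ : L v₀ = 0 := hker v₀ h.symm
        have horth := hv₀S.1 v₀ hLv₀
        have hunit := hv₀S.2
        have : (1:ℝ) = 0 := by
          rw [← hunit, ← horth]
          exact Finset.sum_congr rfl fun i _ => by ring
        norm_num at this
    · intro f u v hu hv hf
      have hvV : v ∈ V := hv
      have hfv : t f f = t v v := by
        rw [hf, hexp u v]
        have htu : ∀ y, t u y = 0 := by
          intro y
          show (∑ i, Lop α A M u i * y i) = 0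
          rw [show Lop α A M u = 0 from hu]
          simp
        rw [htu u, htu v]
        ring
      rw [show (∑ i, Lop α A M f i * f i) = t f f from rfl, hfv]
      rcases eq_or_lt_of_le (Finset.sum_nonneg fun i _ => sq_nonneg (v i)) with hr | hr
      · rw [← hr, mul_zero]
        exact hnn v
      · obtain ⟨hwS, hwval⟩ := hnormalize v hvV hr
        have hmin' : t v₀ v₀ ≤ (∑ i, (v i) ^ 2)⁻¹ * t v v :=
          le_trans (hmin hwS) (le_of_eq hwval)
        have h2 : t v₀ v₀ * ∑ i, (v i) ^ 2
            ≤ ((∑ i, (v i) ^ 2)⁻¹ * t v v) * ∑ i, (v i) ^ 2 :=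
          mul_le_mul_of_nonneg_right hmin' hr.le
        have h3 : ((∑ i, (v i) ^ 2)⁻¹ * t v v) * ∑ i, (v i) ^ 2 = t v v := by
          rw [mul_comm, ← mul_assoc, mul_inv_cancel₀ hr.ne', one_mul]
        rw [h3] at h2
        exact h2
  · -- S empty: V = {0}
    refine ⟨1, one_pos, ?_⟩
    intro f u v hu hv hf
    have hvV : v ∈ V := hv
    have hr0 : ∑ i, (v i) ^ 2 = 0 := by
      rcases eq_or_lt_of_le (Finset.sum_nonneg fun i _ => sq_nonneg (v i)) with hr | hr
      · exact hr.symm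
      · exact absurd ⟨_, (hnormalize v hvV hr).1⟩ hne
    rw [hr0, mul_zero]
    have hfv : t f f = t v v := by
      rw [hf, hexp u v]
      have htu : ∀ y, t u y = 0 := by
        intro y
        show (∑ i, Lop α A M u i * y i) = 0
        rw [show Lop α A M u = 0 from hu]
        simp
      rw [htu u, htu v]
      ring
    calc (0:ℝ) ≤ t f f := hnn f
      _ = ∑ i, Lop α A M f i * f i := rfl
end
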